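/- Let d ≥ 1, Σ a positive definite d×d matrix, θ₀, θ ∈ ℝ^d, σ ≥ 0, ε ≥ 0. Let x be a centered Gaussian random vector on ℝ^d with covariance Σ, let w ~ N(0,σ²) be independent of x, and set y = θ₀ᵀx + w. Then E[ max_{‖z‖₂≤ε} ((x+z)ᵀθ − y)² ] = E[ (|xᵀθ − y| + ε‖θ‖₂)² ] = ‖θ−θ₀‖²_Σ + σ² + ε²‖θ‖₂² + 2ε√(2/π)·‖θ‖₂·√(‖θ−θ₀‖²_Σ + σ²). -/

import Mathlib

/-! By Cauchy–Schwarz the inner maximisation is explicit: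
`max_{‖z‖ ≤ ε} (r + ⟪θ, z⟫)² = (|r| + ε‖θ‖)²`, attained at `z = ±(ε / ‖θ‖) θ`.
The residual `⟪θ, x⟫ - y = ⟪θ - θ₀, x⟫ - w` is a difference of independent centered Gaussians,
hence has law `N(0, ‖θ - θ₀‖²_Σ + σ²)`, and expanding the square reduces the risk to the moments
`E G² = τ²` and `E |G| = √(2/π) τ` of a centered Gaussian `G` with standard deviation `τ`. -/

open MeasureTheory ProbabilityTheory Real Filter Matrix
open scoped RealInnerProductSpace BigOperators NNReal ENNReal Topology

noncomputable section

/-- The Σ-quadratic form `aᵀ Σ a`. -/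
def quadForm {d : ℕ} (S : Matrix (Fin d) (Fin d) ℝ) (a : EuclideanSpace ℝ (Fin d)) : ℝ :=
  ∑ i, ∑ j, a i * S i j * a j

/-- The population adversarial risk of the linear model `f_θ(x) = θᵀx` under squared loss
and `L2` attacks of strength `ε`, for `x ~ N(0,Σ)` and `y = θ₀ᵀx + w`, `w ~ N(0,σ²)`:
`R_L(θ,ε) = ‖θ−θ₀‖²_Σ + σ² + ε²‖θ‖₂² + 2ε√(2/π)‖θ‖₂√(‖θ−θ₀‖²_Σ + σ²)`. -/
def RL {d : ℕ} (S : Matrix (Fin d) (Fin d) ℝ) (θ0 : EuclideanSpace ℝ (Fin d))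
    (σ ε : ℝ) (θ : EuclideanSpace ℝ (Fin d)) : ℝ :=
  quadForm S (θ - θ0) + σ ^ 2 + ε ^ 2 * ‖θ‖ ^ 2 +
    2 * ε * Real.sqrt (2 / Real.pi) * ‖θ‖ * Real.sqrt (quadForm S (θ - θ0) + σ ^ 2)

theorem integral_Ioi_mul_exp_neg_mul_sq {b : ℝ} (hb : 0 < b) :
    ∫ x in Set.Ioi (0 : ℝ), x * exp (-b * x ^ 2) = (2 * b)⁻¹ := by
  have h := integral_rpow_mul_exp_neg_mul_rpow (p := 2) (q := 1) two_pos (by norm_num) hb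
  norm_num [rpow_neg_one] at h
  simp only [neg_mul, h]
  ring

theorem integral_abs_mul_exp_neg_mul_sq {b : ℝ} (hb : 0 < b) :
    ∫ x, |x| * exp (-b * x ^ 2) = b⁻¹ := by
  have h := integral_comp_abs (f := fun x => x * exp (-b * x ^ 2))
  simp only [sq_abs] at h
  rw [h, integral_Ioi_mul_exp_neg_mul_sq hb]
  field_simp

theorem integral_abs_gaussianReal (v : ℝ≥0) :
    ∫ t, |t| ∂gaussianReal 0 v = √(2 / π) * √v := by
  rcases eq_or_ne v 0 with rfl | hv
  · simp [gaussianReal_zero_var]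
  have hdens : ∀ t, gaussianPDFReal 0 v t • |t|
      = (√(2 * π * v))⁻¹ * (|t| * exp (-(2 * v : ℝ)⁻¹ * t ^ 2)) := fun t => by
    rw [gaussianPDFReal, smul_eq_mul, sub_zero]
    ring_nf
  simp_rw [integral_gaussianReal_eq_integral_smul hv, hdens, integral_const_mul,
    integral_abs_mul_exp_neg_mul_sq (by positivity : (0 : ℝ) < (2 * v : ℝ)⁻¹), inv_inv]
  rw [inv_mul_eq_iff_eq_mul₀ (by positivity), ← sqrt_mul (by positivity),
    ← sqrt_mul (by positivity), show 2 * π * v * (2 / π * v) = (2 * v : ℝ) ^ 2 by field_simp,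
    sqrt_sq (by positivity)]

theorem integral_sq_gaussianReal (v : ℝ≥0) : ∫ t, t ^ 2 ∂gaussianReal 0 v = v := by
  simpa [variance_eq_integral measurable_id'.aemeasurable] using
    variance_fun_id_gaussianReal (μ := 0) (v := v)

theorem integral_abs_add_const_sq_gaussianReal (v : ℝ≥0) (c : ℝ) :
    ∫ t, (|t| + c) ^ 2 ∂gaussianReal 0 v = v + c ^ 2 + 2 * c * (√(2 / π) * √v) := by
  have hsq : Integrable (fun t : ℝ => t ^ 2) (gaussianReal 0 v) :=
    (memLp_id_gaussianReal 2).integrable_sq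
  have habs : Integrable (fun t : ℝ => |t|) (gaussianReal 0 v) :=
    (memLp_id_gaussianReal 1).integrable le_rfl |>.abs
  have hexp : ∀ t : ℝ, (|t| + c) ^ 2 = t ^ 2 + 2 * c * |t| + c ^ 2 := fun t => by
    rw [add_sq, sq_abs]; ring
  simp_rw [hexp]
  have hlin : Integrable (fun t : ℝ => 2 * c * |t|) (gaussianReal 0 v) := habs.const_mul _
  rw [integral_add (hsq.fun_add hlin) (integrable_const _), integral_add hsq hlin,
    integral_const_mul, integral_sq_gaussianReal, integral_abs_gaussianReal]
  rw [integral_const, probReal_univ, smul_eq_mul, one_mul]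
  ring

theorem sSup_sq_add_inner_closedBall {E : Type*} [NormedAddCommGroup E] [InnerProductSpace ℝ E]
    (θ : E) {ε : ℝ} (hε : 0 ≤ ε) (a : ℝ) :
    sSup ((fun z => (a + ⟪θ, z⟫) ^ 2) '' Metric.closedBall 0 ε) = (|a| + ε * ‖θ‖) ^ 2 := by
  refine IsGreatest.csSup_eq ⟨?_, ?_⟩
  · rcases eq_or_ne θ 0 with rfl | hθ
    · exact ⟨0, by simpa using hε, by simp⟩
    set u : E := (ε / ‖θ‖) • θ
    have hθ' : ‖θ‖ ≠ 0 := norm_ne_zero_iff.mpr hθ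
    have hu : ‖u‖ = ε := by
      rw [norm_smul, norm_div, norm_norm, Real.norm_of_nonneg hε, div_mul_cancel₀ _ hθ']
    have hθu : ⟪θ, u⟫ = ε * ‖θ‖ := by
      rw [real_inner_smul_right, real_inner_self_eq_norm_sq]
      field_simp
    rcases le_or_gt 0 a with ha | ha
    · refine ⟨u, by simp [hu], ?_⟩
      simp only [hθu, abs_of_nonneg ha]
    · refine ⟨-u, by simp [hu], ?_⟩
      simp only [inner_neg_right, hθu, abs_of_neg ha]
      ring
  · rintro _ ⟨z, hz, rfl⟩
    have hz : ‖z‖ ≤ ε := by simpa using hz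
    have hbound : |a + ⟪θ, z⟫| ≤ |a| + ε * ‖θ‖ := calc
      |a + ⟪θ, z⟫| ≤ |a| + ‖θ‖ * ‖z‖ :=
        (abs_add_le _ _).trans (by gcongr; exact abs_real_inner_le_norm θ z)
      _ ≤ |a| + ε * ‖θ‖ := by nlinarith [norm_nonneg θ]
    simpa only [sq_abs] using pow_le_pow_left₀ (abs_nonneg _) hbound 2

theorem gaussianReal_sub_gaussianReal_of_indepFun {Ω : Type*} [MeasurableSpace Ω]
    {μ : Measure Ω} {m₁ m₂ : ℝ} {v₁ v₂ : ℝ≥0} {X Y : Ω → ℝ} (hXY : IndepFun X Y μ)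
    (hX : μ.map X = gaussianReal m₁ v₁) (hY : μ.map Y = gaussianReal m₂ v₂) :
    μ.map (X - Y) = gaussianReal (m₁ - m₂) (v₁ + v₂) := by
  have hYm : AEMeasurable Y μ :=
    .of_map_ne_zero (by rw [hY]; exact IsProbabilityMeasure.ne_zero _)
  have hnegY : μ.map (Neg.neg ∘ Y) = gaussianReal (-m₂) v₂ := by
    rw [← AEMeasurable.map_map_of_aemeasurable measurable_neg.aemeasurable hYm, hY,
      gaussianReal_map_neg]
  rw [sub_eq_add_neg m₁]
  convert gaussianReal_add_gaussianReal_of_indepFun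
    (hXY.comp measurable_id measurable_neg) hX hnegY using 2
  exact sub_eq_add_neg X Y

theorem quadForm_nonneg {d : ℕ} {S : Matrix (Fin d) (Fin d) ℝ} (hS : S.PosSemidef)
    (a : EuclideanSpace ℝ (Fin d)) : 0 ≤ quadForm S a := by
  have h := hS.dotProduct_mulVec_nonneg a
  simp only [dotProduct, mulVec, star_trivial, Finset.mul_sum] at h
  simpa only [quadForm, mul_assoc] using h

/-- A centered Gaussian vector `x` with covariance `Σ` is encoded by all of its one-dimensional
projections `⟪u, x⟫` having law `N(0, uᵀΣu)`. -/
theorem adversarial_risk_closed_form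
    {d : ℕ} (S : Matrix (Fin d) (Fin d) ℝ) (hS : S.PosDef)
    (θ0 θ : EuclideanSpace ℝ (Fin d)) (σ ε : ℝ) (hε : 0 ≤ ε)
    {Ω : Type} [MeasurableSpace Ω] (μ : Measure Ω) [IsProbabilityMeasure μ]
    (x : Ω → EuclideanSpace ℝ (Fin d)) (w : Ω → ℝ)
    (hx : ∀ u : EuclideanSpace ℝ (Fin d),
      Measure.map (fun ω => ⟪u, x ω⟫) μ = gaussianReal 0 (Real.toNNReal (quadForm S u)))
    (hw : Measure.map w μ = gaussianReal 0 (Real.toNNReal (σ ^ 2)))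
    (hindep : IndepFun x w μ)
    (y : Ω → ℝ) (hy : ∀ ω, y ω = ⟪θ0, x ω⟫ + w ω) :
    (∫ ω, sSup ((fun z => (⟪θ, x ω + z⟫ - y ω) ^ 2) '' Metric.closedBall 0 ε) ∂μ
        = ∫ ω, (|⟪θ, x ω⟫ - y ω| + ε * ‖θ‖) ^ 2 ∂μ) ∧
    (∫ ω, (|⟪θ, x ω⟫ - y ω| + ε * ‖θ‖) ^ 2 ∂μ = RL S θ0 σ ε θ) := by
  have hsup : ∀ ω, sSup ((fun z => (⟪θ, x ω + z⟫ - y ω) ^ 2) '' Metric.closedBall 0 ε)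
      = (|⟪θ, x ω⟫ - y ω| + ε * ‖θ‖) ^ 2 := fun ω => by
    simpa only [inner_add_right, add_sub_right_comm] using
      sSup_sq_add_inner_closedBall θ hε (⟪θ, x ω⟫ - y ω)
  refine ⟨integral_congr_ae (ae_of_all _ hsup), ?_⟩
  have hq := quadForm_nonneg hS.posSemidef (θ - θ0)
  have hres : μ.map (fun ω => ⟪θ, x ω⟫ - y ω)
      = gaussianReal 0 (quadForm S (θ - θ0) + σ ^ 2).toNNReal := by
    have hfun : (fun ω => ⟪θ, x ω⟫ - y ω) = (fun ω => ⟪θ - θ0, x ω⟫) - w := by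
      funext ω
      simp only [hy, inner_sub_left, Pi.sub_apply]
      ring
    have hind : IndepFun (fun ω => ⟪θ - θ0, x ω⟫) w μ :=
      hindep.comp (measurable_const.inner measurable_id) measurable_id
    rw [hfun, gaussianReal_sub_gaussianReal_of_indepFun hind (hx _) hw, sub_zero,
      Real.toNNReal_add hq (sq_nonneg σ)]
  have hresm : AEMeasurable (fun ω => ⟪θ, x ω⟫ - y ω) μ :=
    .of_map_ne_zero (by rw [hres]; exact IsProbabilityMeasure.ne_zero _)
  rw [← integral_map (f := fun t => (|t| + ε * ‖θ‖) ^ 2) hresm (by fun_prop), hres,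
    integral_abs_add_const_sq_gaussianReal, Real.coe_toNNReal _ (by positivity), RL]
  ring

end
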